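/- arXiv:1804.02531 — 2 statements merged into one kernel-verified Lean document; each statement's English description precedes it below -/
import Mathlib

section
/- Let n ≥ 2, m ≥ 1, and let L be an injective length distribution of length m (all entries of L distinct) with UD_n(L) nonempty. Then ρ_{n,L} = |PR_n(L)|/|UD_n(L)| ≥ ϖ_{n,m}, where ϖ_{n,m} := ∏_{i=1}^{m−1} (1 − (1 − n^{−i})/(n−1)). -/
open Finset Filter Topology

/-- A code `(v 0, …, v (m-1))` is *uniquely decodable* if any two nonempty sequences of
indices whose corresponding concatenations of code words coincide are equal. -/
def IsUDCode {X : Type*} {m : ℕ} (v : Fin m → List X) : Prop :=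
  ∀ s t : List (Fin m), s ≠ [] → t ≠ [] →
    (s.map v).flatten = (t.map v).flatten → s = t

/-- A *prefix code*: an injective sequence of nonempty words where no code word
is a prefix of another. -/
def IsPrefixCode {X : Type*} {m : ℕ} (v : Fin m → List X) : Prop :=
  Function.Injective v ∧ (∀ i, v i ≠ []) ∧ ∀ i j, i ≠ j → ¬ v i <+: v j

/-- The set of uniquely decodable codes over an `n`-letter alphabet with
length distribution `L`. -/
def UD (n : ℕ) {m : ℕ} (L : Fin m → ℕ) : Set (Fin m → List (Fin n)) :=
  {v | (∀ i, (v i).length = L i) ∧ IsUDCode v}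

/-- The set of prefix codes over an `n`-letter alphabet with length distribution `L`. -/
def PR (n : ℕ) {m : ℕ} (L : Fin m → ℕ) : Set (Fin m → List (Fin n)) :=
  {v | (∀ i, (v i).length = L i) ∧ IsPrefixCode v}

/-- `ρ_{n,L} = |PR_n(L)| / |UD_n(L)|`. -/
noncomputable def rho (n : ℕ) {m : ℕ} (L : Fin m → ℕ) : ℝ :=
  ((PR n L).ncard : ℝ) / ((UD n L).ncard : ℝ)

/-- `ξ_{n,m} = inf_{L ∈ ℒ_{n,m}} ρ_{n,L}`. -/
noncomputable def xi (n m : ℕ) : ℝ :=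
  sInf {r : ℝ | ∃ L : Fin m → ℕ, (∀ i, 1 ≤ L i) ∧ (UD n L).Nonempty ∧ r = rho n L}

/-- `ς_{n,m} = (n - (m mod (n-1))) / n^{⌊m/(n-1)⌋ + 1}`. -/
noncomputable def varsigma (n m : ℕ) : ℝ :=
  ((n : ℝ) - (m % (n - 1) : ℕ)) / (n : ℝ) ^ (m / (n - 1) + 1)

/-- `q_{n,m}`: `1` if `n ≥ m`, and `(m-1)!/(m-1)^{m-1}` if `n < m`. -/
noncomputable def qnm (n m : ℕ) : ℝ :=
  if m ≤ n then 1 else (Nat.factorial (m - 1) : ℝ) / ((m - 1 : ℕ) : ℝ) ^ (m - 1)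

/-- `ϖ_{n,m} = ∏_{i=1}^{m-1} (1 - (1 - n^{-i})/(n-1))`. -/
noncomputable def varpi (n m : ℕ) : ℝ :=
  ∏ i ∈ Finset.Icc 1 (m - 1), (1 - (1 - 1 / (n : ℝ) ^ i) / ((n : ℝ) - 1))

/-- `η_{n,m} = 1 + Σ_{i=1}^{m-1} C(m-1,i)/(n^i - 1)`. -/
noncomputable def eta (n m : ℕ) : ℝ :=
  1 + ∑ i ∈ Finset.Icc 1 (m - 1), ((m - 1).choose i : ℝ) / ((n : ℝ) ^ i - 1)

/-!
Since `|UD_n(L)| ≤ ∏ n ^ L i`, it suffices to show `|PR_n(L)| ≥ ϖ_{n,m} ∏ n ^ L i`. Sort the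
lengths increasingly, `L_0 < ⋯ < L_{m-1}`, so that `L_j ≥ j + 1`, and build prefix codes greedily:
a word of length `L_k` extends a prefix code `w_0, …, w_{k-1}` unless some `w_j` is a prefix of it,
which excludes at most `∑_j n ^ (L_k - L_j) ≤ n ^ L_k ∑_{j<k} n ^ -(j+1) = n ^ L_k (1 - n^{-k})/(n-1)`
words. So the `k`-th step multiplies the count by at least `n ^ L_k` times the `k`-th factor of `ϖ`.
-/
noncomputable def varpiFactor (n i : ℕ) : ℝ :=
  1 - (1 - 1 / (n : ℝ) ^ i) / ((n : ℝ) - 1)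

theorem varpiFactor_nonneg {n : ℕ} (hn : 2 ≤ n) (i : ℕ) : 0 ≤ varpiFactor n i := by
  have hn' : (2 : ℝ) ≤ n := by exact_mod_cast hn
  have hpow : 0 < 1 / (n : ℝ) ^ i := by positivity
  rw [varpiFactor, sub_nonneg, div_le_one (by linarith)]
  linarith

theorem varpi_eq_prod_varpiFactor (n m : ℕ) : varpi n m = ∏ i : Fin m, varpiFactor n i := by
  rw [varpi, Fin.prod_univ_eq_prod_range (varpiFactor n)]
  rcases m with _ | m
  · simp
  · rw [range_eq_Ico, prod_eq_prod_Ico_succ_bot (Nat.succ_pos m)]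
    simp [varpiFactor, Finset.Ico_add_one_right_eq_Icc]

theorem varpiFactor_le_one_sub_sum {n k : ℕ} (hn : 2 ≤ n) (ℓ : Fin k → ℕ)
    (hℓ : ∀ j : Fin k, (j : ℕ) + 1 ≤ ℓ j) :
    varpiFactor n k ≤ 1 - ∑ j, 1 / (n : ℝ) ^ ℓ j := by
  have hn' : (2 : ℝ) ≤ n := by exact_mod_cast hn
  have geom : ∀ k, ∑ j ∈ range k, 1 / (n : ℝ) ^ (j + 1) = (1 - 1 / (n : ℝ) ^ k) / ((n : ℝ) - 1) := by
    intro k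
    induction k with
    | zero => simp
    | succ k ih =>
      have : (n : ℝ) - 1 ≠ 0 := by linarith
      rw [sum_range_succ, ih]
      field_simp
      ring
  rw [varpiFactor, ← geom, ← Fin.sum_univ_eq_sum_range (fun j => 1 / (n : ℝ) ^ (j + 1))]
  refine sub_le_sub_left (sum_le_sum fun j _ => ?_) 1
  exact one_div_pow_le_one_div_pow_of_le (by linarith) (hℓ j)

namespace IsPrefixCode

variable {X : Type*}

theorem comp {m k : ℕ} {v : Fin m → List X} (hv : IsPrefixCode v) {f : Fin k → Fin m}
    (hf : Function.Injective f) : IsPrefixCode (v ∘ f) :=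
  ⟨hv.1.comp hf, fun i => hv.2.1 (f i), fun _ _ hij => hv.2.2 _ _ (hf.ne hij)⟩

theorem snoc {k : ℕ} {w : Fin k → List X} (hw : IsPrefixCode w) {u : List X} (hu : u ≠ [])
    (hlt : ∀ j, (w j).length < u.length) (hfree : ∀ j, ¬ w j <+: u) :
    IsPrefixCode (Fin.snoc w u : Fin (k + 1) → List X) := by
  have hne : ∀ i, (Fin.snoc w u : Fin (k + 1) → List X) i ≠ [] := by
    intro i
    induction i using Fin.lastCases with
    | last => simpa using hu
    | cast i => simpa using hw.2.1 i
  have hpre : ∀ i j, i ≠ j →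
      ¬ (Fin.snoc w u : Fin (k + 1) → List X) i <+: (Fin.snoc w u : Fin (k + 1) → List X) j := by
    intro i j hij
    induction i using Fin.lastCases with
    | last =>
      induction j using Fin.lastCases with
      | last => exact absurd rfl hij
      | cast j =>
        simpa using fun h : u <+: w j => (hlt j).not_ge h.length_le
    | cast i =>
      induction j using Fin.lastCases with
      | last => simpa using hfree i
      | cast j => simpa using hw.2.2 i j fun h => hij (congrArg _ h)
  refine ⟨fun i j hij => ?_, hne, hpre⟩
  by_contra h
  exact hpre i j h (hij ▸ List.prefix_refl _)

end IsPrefixCode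

section Counting

variable {α : Type*} [Fintype α] [DecidableEq α]

theorem card_filter_prefix_vector {A : ℕ} (w : List α) (hw : w.length ≤ A) :
    #{u : List.Vector α A | w <+: u.toList} = Fintype.card α ^ (A - w.length) := by
  rw [← card_vector, ← card_univ]
  refine card_nbij' (fun u => ⟨u.toList.drop w.length, by simp⟩)
    (fun z => ⟨w ++ z.toList, by simp; omega⟩) (fun _ _ => mem_coe.2 (mem_univ _)) ?_ ?_ ?_
  · intro z _
    exact mem_filter.2 ⟨mem_univ _, List.prefix_append _ _⟩
  · intro u hu
    obtain ⟨t, ht⟩ := (mem_filter.1 hu).2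
    apply List.Vector.toList_injective
    simp [← ht]
  · intro z _
    apply List.Vector.toList_injective
    simp

theorem pow_le_card_filter_prefix_free_vector {ι : Type*} [Fintype ι] {A : ℕ} (w : ι → List α)
    (hw : ∀ i, (w i).length ≤ A) :
    Fintype.card α ^ A ≤ #{u : List.Vector α A | ∀ i, ¬ w i <+: u.toList}
      + ∑ i, Fintype.card α ^ (A - (w i).length) := by
  have hbad : ({u : List.Vector α A | ¬ ∀ i, ¬ w i <+: u.toList} : Finset _)
      ⊆ univ.biUnion fun i => {u : List.Vector α A | w i <+: u.toList} := by
    intro u hu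
    simpa using hu
  calc Fintype.card α ^ A = Fintype.card (List.Vector α A) := (card_vector A).symm
    _ = #{u : List.Vector α A | ∀ i, ¬ w i <+: u.toList}
        + #{u : List.Vector α A | ¬ ∀ i, ¬ w i <+: u.toList} :=
      (card_filter_add_card_filter_not _).symm
    _ ≤ _ := by
      gcongr
      refine (card_le_card hbad).trans (card_biUnion_le.trans_eq ?_)
      exact sum_congr rfl fun i _ => card_filter_prefix_vector (w i) (hw i)

end Counting

/-- Words are taken as vectors so that the prefix codes form a `Finset`. -/
noncomputable def prefixCodes (n : ℕ) {m : ℕ} (L : Fin m → ℕ) :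
    Finset (∀ i, List.Vector (Fin n) (L i)) := by
  classical exact {v | IsPrefixCode fun i => (v i).toList}

theorem mem_prefixCodes {n m : ℕ} {L : Fin m → ℕ} {v : ∀ i, List.Vector (Fin n) (L i)} :
    v ∈ prefixCodes n L ↔ IsPrefixCode fun i => (v i).toList := by
  simp [prefixCodes]

theorem card_prefixCodes_init_mul_le {n k : ℕ} (L : Fin (k + 1) → ℕ) (hlast : 1 ≤ L (Fin.last k))
    (hlt : ∀ j : Fin k, L j.castSucc < L (Fin.last k)) :
    (#(prefixCodes n fun j => L j.castSucc) : ℝ) *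
        ((n : ℝ) ^ L (Fin.last k) - ∑ j : Fin k, (n : ℝ) ^ (L (Fin.last k) - L j.castSucc))
      ≤ #(prefixCodes n L) := by
  set A := L (Fin.last k)
  let avoiders (w : ∀ j : Fin k, List.Vector (Fin n) (L j.castSucc)) :
      Finset (List.Vector (Fin n) A) := {u | ∀ j, ¬ (w j).toList <+: u.toList}
  let extend (p : Σ _ : ∀ j : Fin k, List.Vector (Fin n) (L j.castSucc), List.Vector (Fin n) A) :
      ∀ i, List.Vector (Fin n) (L i) := Fin.snoc p.1 p.2
  have hmaps : Set.MapsTo extend ((prefixCodes n _).sigma avoiders) (prefixCodes n L) := by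
    rintro ⟨w, u⟩ hwu
    obtain ⟨hw, hu⟩ := mem_sigma.1 hwu
    have hsnoc : (fun i => (extend ⟨w, u⟩ i).toList)
        = Fin.snoc (fun j => (w j).toList) u.toList := by
      funext i
      induction i using Fin.lastCases <;> simp [extend]
    rw [mem_coe, mem_prefixCodes, hsnoc]
    refine (mem_prefixCodes.1 hw).snoc ?_ (fun j => by simpa using hlt j) (mem_filter.1 hu).2
    rw [← List.length_pos_iff, u.toList_length]
    exact hlast
  have hinj : Set.InjOn extend ((prefixCodes n _).sigma avoiders) := by
    rintro ⟨w, u⟩ - ⟨w', u'⟩ - h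
    have hw : w = w' := by simpa [extend] using congrArg Fin.init h
    have hu : u = u' := by simpa [extend] using congrFun h (Fin.last k)
    subst hw hu
    rfl
  have hcount : ∀ w : ∀ j : Fin k, List.Vector (Fin n) (L j.castSucc),
      (n : ℝ) ^ A - ∑ j : Fin k, (n : ℝ) ^ (A - L j.castSucc) ≤ #(avoiders w) := by
    intro w
    have hcover : n ^ A ≤ #(avoiders w) + ∑ j : Fin k, n ^ (A - L j.castSucc) := by
      convert pow_le_card_filter_prefix_free_vector (A := A) (fun j => (w j).toList)
        (fun j => by simpa using (hlt j).le) using 2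
      · simp
      · exact congrArg card (filter_congr_decidable _ _ _).symm
      · simp
    rw [sub_le_iff_le_add]
    exact_mod_cast hcover
  calc (#(prefixCodes n fun j => L j.castSucc) : ℝ) *
        ((n : ℝ) ^ A - ∑ j : Fin k, (n : ℝ) ^ (A - L j.castSucc))
      = ∑ _w ∈ prefixCodes n fun j => L j.castSucc,
          ((n : ℝ) ^ A - ∑ j : Fin k, (n : ℝ) ^ (A - L j.castSucc)) := by
        rw [sum_const, nsmul_eq_mul]
    _ ≤ ∑ w ∈ prefixCodes n fun j => L j.castSucc, (#(avoiders w) : ℝ) :=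
        sum_le_sum fun w _ => hcount w
    _ ≤ #(prefixCodes n L) := by
        rw [← Nat.cast_sum, ← card_sigma]
        exact_mod_cast card_le_card_of_injOn extend hmaps hinj

theorem StrictMono.val_add_one_le {m : ℕ} {f : Fin m → ℕ} (hf : StrictMono f)
    (hf0 : ∀ i, 1 ≤ f i) (i : Fin m) : (i : ℕ) + 1 ≤ f i := by
  obtain ⟨i, hi⟩ := i
  induction i with
  | zero => exact hf0 _
  | succ i ih =>
    exact (ih (by omega)).trans_lt (hf (Nat.lt_succ_self i))

theorem prod_le_card_prefixCodes {n : ℕ} (hn : 2 ≤ n) :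
    ∀ {m : ℕ} (L : Fin m → ℕ), StrictMono L → (∀ i, 1 ≤ L i) →
      ∏ i, (n : ℝ) ^ L i * varpiFactor n i ≤ #(prefixCodes n L)
  | 0, L, _, _ => by
    simp [prefixCodes, IsPrefixCode, Function.injective_of_subsingleton]
  | k + 1, L, hL, hL1 => by
    set A := L (Fin.last k)
    have hlt : ∀ j : Fin k, L j.castSucc < A := fun j => hL (Fin.castSucc_lt_last j)
    have hinit := prod_le_card_prefixCodes hn (fun j => L j.castSucc)
      (hL.comp Fin.strictMono_castSucc) fun j => hL1 _
    have hlast : (n : ℝ) ^ A * varpiFactor n k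
        ≤ (n : ℝ) ^ A - ∑ j : Fin k, (n : ℝ) ^ (A - L j.castSucc) := by
      have hidx := (hL.comp Fin.strictMono_castSucc).val_add_one_le fun j => hL1 _
      have hpow : ∀ j : Fin k,
          (n : ℝ) ^ (A - L j.castSucc) = (n : ℝ) ^ A * (1 / (n : ℝ) ^ L j.castSucc) := fun j => by
        rw [pow_sub₀ _ (by positivity) (hlt j).le, one_div]
      calc (n : ℝ) ^ A * varpiFactor n k
          ≤ (n : ℝ) ^ A * (1 - ∑ j : Fin k, 1 / (n : ℝ) ^ L j.castSucc) := by
            gcongr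
            exact varpiFactor_le_one_sub_sum hn _ hidx
        _ = _ := by simp only [hpow, mul_sub, mul_one, mul_sum]
    rw [Fin.prod_univ_castSucc]
    simp only [Fin.val_castSucc, Fin.val_last]
    calc (∏ j : Fin k, (n : ℝ) ^ L j.castSucc * varpiFactor n j) * ((n : ℝ) ^ A * varpiFactor n k)
        ≤ #(prefixCodes n fun j => L j.castSucc) *
            ((n : ℝ) ^ A - ∑ j : Fin k, (n : ℝ) ^ (A - L j.castSucc)) := by
          exact mul_le_mul hinit hlast (mul_nonneg (by positivity) (varpiFactor_nonneg hn k))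
            (by positivity)
    _ ≤ #(prefixCodes n L) := card_prefixCodes_init_mul_le L (hL1 _) hlt

section VectorCodes

variable {n m : ℕ} {L : Fin m → ℕ}

theorem toList_pi_injective :
    Function.Injective fun (v : ∀ i, List.Vector (Fin n) (L i)) i => (v i).toList :=
  fun _ _ h => funext fun i => List.Vector.toList_injective (congrFun h i)

theorem PR_eq_image_prefixCodes :
    PR n L = (fun (v : ∀ i, List.Vector (Fin n) (L i)) i => (v i).toList) '' prefixCodes n L := by
  ext v
  constructor
  · rintro ⟨hlen, hv⟩
    exact ⟨fun i => ⟨v i, hlen i⟩, mem_prefixCodes.2 hv, rfl⟩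
  · rintro ⟨v, hv, rfl⟩
    exact ⟨fun i => (v i).toList_length, mem_prefixCodes.1 hv⟩

theorem ncard_PR : (PR n L).ncard = #(prefixCodes n L) := by
  rw [PR_eq_image_prefixCodes, Set.ncard_image_of_injective _ toList_pi_injective,
    Set.ncard_coe_finset]

theorem UD_subset_range :
    UD n L ⊆ Set.range fun (v : ∀ i, List.Vector (Fin n) (L i)) i => (v i).toList :=
  fun v hv => ⟨fun i => ⟨v i, hv.1 i⟩, rfl⟩

theorem UD_finite : (UD n L).Finite :=
  (Set.finite_range _).subset UD_subset_range

theorem ncard_UD_le : (UD n L).ncard ≤ ∏ i, n ^ L i := by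
  refine (Set.ncard_le_ncard UD_subset_range (Set.finite_range _)).trans_eq ?_
  rw [Set.ncard_range_of_injective toList_pi_injective, Nat.card_eq_fintype_card,
    Fintype.card_pi]
  simp

theorem comp_mem_PR {v : Fin m → List (Fin n)} (hv : v ∈ PR n L) (σ : Equiv.Perm (Fin m)) :
    v ∘ σ ∈ PR n (L ∘ σ) :=
  ⟨fun i => hv.1 (σ i), hv.2.comp σ.injective⟩

theorem ncard_PR_comp_perm (σ : Equiv.Perm (Fin m)) : (PR n (L ∘ σ)).ncard = (PR n L).ncard := by
  have himage : PR n (L ∘ σ) = (· ∘ σ) '' PR n L := by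
    refine Set.Subset.antisymm (fun u hu => ⟨u ∘ σ.symm, ?_, ?_⟩) ?_
    · simpa [Function.comp_assoc] using comp_mem_PR hu σ.symm
    · simp [Function.comp_assoc]
    · rintro _ ⟨v, hv, rfl⟩
      exact comp_mem_PR hv σ
  rw [himage, Set.ncard_image_of_injective _ σ.surjective.injective_comp_right]

end VectorCodes

theorem varpi_mul_prod_le_ncard_PR {n m : ℕ} (hn : 2 ≤ n) {L : Fin m → ℕ} (hL : ∀ i, 1 ≤ L i)
    (hinj : Function.Injective L) :
    varpi n m * ∏ i, (n : ℝ) ^ L i ≤ (PR n L).ncard := by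
  set σ := Tuple.sort L
  have hmono : StrictMono (L ∘ σ) :=
    (Tuple.monotone_sort L).strictMono_of_injective (hinj.comp σ.injective)
  calc varpi n m * ∏ i, (n : ℝ) ^ L i = ∏ i, (n : ℝ) ^ L (σ i) * varpiFactor n i := by
        rw [prod_mul_distrib, varpi_eq_prod_varpiFactor, Equiv.prod_comp σ fun i => (n : ℝ) ^ L i,
          mul_comm]
    _ ≤ #(prefixCodes n (L ∘ σ)) := prod_le_card_prefixCodes hn _ hmono fun i => hL _
    _ = (PR n L).ncard := by rw [← ncard_PR, ncard_PR_comp_perm]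

theorem stmt2_general (n m : ℕ) (hn : 2 ≤ n) (L : Fin m → ℕ)
    (hL : ∀ i, 1 ≤ L i) (hinj : Function.Injective L) (hud : (UD n L).Nonempty) :
    varpi n m ≤ rho n L := by
  have hUD_pos : (0 : ℝ) < (UD n L).ncard := by exact_mod_cast (Set.ncard_pos UD_finite).2 hud
  have hUD_le : ((UD n L).ncard : ℝ) ≤ ∏ i, (n : ℝ) ^ L i := by exact_mod_cast ncard_UD_le
  have hvarpi : 0 ≤ varpi n m := by
    rw [varpi_eq_prod_varpiFactor]
    exact prod_nonneg fun i _ => varpiFactor_nonneg hn i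
  rw [rho, le_div_iff₀ hUD_pos]
  calc varpi n m * (UD n L).ncard ≤ varpi n m * ∏ i, (n : ℝ) ^ L i := by gcongr
    _ ≤ (PR n L).ncard := varpi_mul_prod_le_ncard_PR hn hL hinj

/-- Theorem 2 (second part): for an injective `L ∈ ℒ_{n,m}`, `ρ_{n,L} ≥ ϖ_{n,m}`. -/
theorem stmt2 (n m : ℕ) (hn : 2 ≤ n) (hm : 1 ≤ m) (L : Fin m → ℕ)
    (hL : ∀ i, 1 ≤ L i) (hinj : Function.Injective L) (hud : (UD n L).Nonempty) :
    varpi n m ≤ rho n L :=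
  stmt2_general n m hn L hL hinj hud
end

section
/- For all integers n ≥ 2 and m ≥ 1, ξ_{n,m} ≤ 1/η_{n,m}, where η_{n,m} := 1 + Σ_{i=1}^{m−1} binom(m−1, i)/(n^i − 1). -/
/-!
Take the length distribution `(1, k, …, k)` with `M = m - 1` words of length `k`. In a prefix
code the long words must avoid the first letter `x` of the one-letter word, so there are at most
`n ((n - 1) n^(k-1))^M` prefix codes. On the other hand `[x]` together with any long words whose
parts after their leading `x`'s form a prefix code is uniquely decodable, and all but
`M² (k + 1) n^(k(M-1))` families of `M` words of length `k` have this property. Hence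
`ρ_{n,L} ≤ ((n - 1)/n)^M / (1 - M² (k + 1)/n^k)`, and letting `k → ∞` gives
`ξ_{n,m} ≤ ((n - 1)/n)^M`. Finally `(n - 1)^i ≤ n^i - 1` bounds `η_{n,m}` termwise by the binomial
expansion of `(n/(n - 1))^M`.
-/

open Finset Filter Topology

namespace List

variable {α : Type*} [DecidableEq α] {x : α}

theorem replicate_takeWhile_append_dropWhile (x : α) (l : List α) :
    replicate (l.takeWhile (· == x)).length x ++ l.dropWhile (· == x) = l := by
  conv_rhs => rw [← takeWhile_append_dropWhile (p := (· == x)) (l := l)]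
  congr 1
  exact (eq_replicate_iff.2 ⟨rfl, fun b hb => by simpa using mem_takeWhile_imp hb⟩).symm

theorem head?_dropWhile_beq_ne (x : α) (l : List α) : (l.dropWhile (· == x)).head? ≠ some x := by
  intro h
  simpa [h] using head?_dropWhile_not (· == x) l

theorem dropWhile_beq_replicate_append {r : List α} (c : ℕ) (hr : r.head? ≠ some x) :
    (replicate c x ++ r).dropWhile (· == x) = r := by
  rw [dropWhile_append_of_pos (by simp), dropWhile_beq_eq_self_of_head?_ne hr]

theorem replicate_append_inj_of_head?_ne {c d : ℕ} {r r' : List α} (hr : r.head? ≠ some x)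
    (hr' : r'.head? ≠ some x) (h : replicate c x ++ r = replicate d x ++ r') : c = d ∧ r = r' := by
  have hrr' : r = r' := by
    rw [← dropWhile_beq_replicate_append c hr, h, dropWhile_beq_replicate_append d hr']
  subst hrr'
  simpa using congrArg length h

theorem eq_of_length_eq_of_dropWhile_beq_eq {l l' : List α} (x : α) (hlen : l.length = l'.length)
    (h : l.dropWhile (· == x) = l'.dropWhile (· == x)) : l = l' := by
  rw [← replicate_takeWhile_append_dropWhile x l, ← replicate_takeWhile_append_dropWhile x l']
    at hlen ⊢
  simp only [length_append, length_replicate, h] at hlen ⊢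
  rw [Nat.add_right_cancel hlen]

end List

theorem isPrefixCode_iff {X : Type*} {m : ℕ} (v : Fin m → List X) :
    IsPrefixCode v ↔ (∀ i, v i ≠ []) ∧ ∀ i j, i ≠ j → ¬ v i <+: v j := by
  refine ⟨fun h => h.2, fun ⟨hne, hpre⟩ => ⟨fun i j hij => ?_, hne, hpre⟩⟩
  by_contra h
  exact hpre i j h (hij ▸ List.prefix_refl _)

theorem IsPrefixCode.eq_of_append_eq {X : Type*} {m : ℕ} {v : Fin m → List X} (hv : IsPrefixCode v)
    {i j : Fin m} {s t : List X} (h : v i ++ s = v j ++ t) : i = j := by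
  by_contra hij
  rcases List.prefix_or_prefix_of_prefix ⟨s, h⟩ (List.prefix_append (v j) t) with hp | hp
  · exact hv.2.2 i j hij hp
  · exact hv.2.2 j i (Ne.symm hij) hp

section UniquelyDecodable

variable {X : Type*} {M : ℕ}

theorem flatten_map_cons_replicate_zero (x : X) (w : Fin M → List X) (p : ℕ)
    (r : List (Fin (M + 1))) :
    ((List.replicate p 0 ++ r).map (Fin.cons [x] w : Fin (M + 1) → List X)).flatten =
      List.replicate p x ++ (r.map (Fin.cons [x] w : Fin (M + 1) → List X)).flatten := by
  induction p with
  | zero => rfl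
  | succ p ih => simp [List.replicate_succ]

theorem exists_replicate_zero_append (s : List (Fin (M + 1))) :
    ∃ p r, s = List.replicate p 0 ++ r ∧ (r = [] ∨ ∃ i s', r = Fin.succ i :: s') := by
  refine ⟨_, _, (s.replicate_takeWhile_append_dropWhile 0).symm, ?_⟩
  rcases h : s.dropWhile (· == 0) with _ | ⟨a, s'⟩
  · exact Or.inl rfl
  · obtain ⟨i, rfl⟩ := Fin.eq_succ_of_ne_zero (i := a) fun ha =>
      s.head?_dropWhile_beq_ne 0 (by rw [h, ha]; rfl)
    exact Or.inr ⟨i, s', rfl⟩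

variable [DecidableEq X]

/-- In a parse, every maximal run of `x`'s consists of copies of `[x]` followed by the leading
`x`'s of the next long word, and the prefix property of the stripped words identifies that word. -/
theorem isUDCode_cons_singleton (x : X) (w : Fin M → List X)
    (hw : IsPrefixCode fun i => (w i).dropWhile (· == x)) :
    IsUDCode (Fin.cons [x] w : Fin (M + 1) → List X) := by
  set c : Fin (M + 1) → List X := Fin.cons [x] w
  set u := fun i => (w i).dropWhile (· == x)
  set a := fun i => ((w i).takeWhile (· == x)).length
  have hflatten_zero (p : ℕ) : ((List.replicate p 0).map c).flatten = List.replicate p x := by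
    simpa only [List.append_nil, List.map_nil, List.flatten_nil] using
      flatten_map_cons_replicate_zero x w p []
  have hflatten_succ (p : ℕ) (i : Fin M) (s : List (Fin (M + 1))) :
      ((List.replicate p 0 ++ Fin.succ i :: s).map c).flatten =
        List.replicate (p + a i) x ++ (u i ++ (s.map c).flatten) := by
    rw [flatten_map_cons_replicate_zero, List.replicate_add, List.append_assoc]
    simp [c, u, a, ← List.append_assoc, List.replicate_takeWhile_append_dropWhile]
  have hhead (i : Fin M) (z : List X) : (u i ++ z).head? ≠ some x := by
    rw [List.head?_append_of_ne_nil _ (hw.2.1 i)]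
    exact List.head?_dropWhile_beq_ne x (w i)
  suffices h : ∀ s t : List (Fin (M + 1)), (s.map c).flatten = (t.map c).flatten → s = t from
    fun s t _ _ => h s t
  intro s t hst
  induction hN : s.length using Nat.strong_induction_on generalizing s t with
  | _ N ih =>
    obtain ⟨p, r, rfl, hr⟩ := exists_replicate_zero_append s
    obtain ⟨q, r', rfl, hr'⟩ := exists_replicate_zero_append t
    rcases hr with rfl | ⟨i, s', rfl⟩ <;> rcases hr' with rfl | ⟨j, t', rfl⟩
    · rw [List.append_nil, List.append_nil, hflatten_zero, hflatten_zero] at hst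
      rw [List.replicate_left_inj.1 hst]
    · rw [List.append_nil, hflatten_zero, hflatten_succ, ← List.append_nil (List.replicate p x)]
        at hst
      have := (List.replicate_append_inj_of_head?_ne (by simp) (hhead j _) hst).2
      exact absurd this.symm (by simp [hw.2.1 j])
    · rw [List.append_nil, hflatten_zero, hflatten_succ, ← List.append_nil (List.replicate q x)]
        at hst
      have := (List.replicate_append_inj_of_head?_ne (hhead i _) (by simp) hst).2
      exact absurd this (by simp [hw.2.1 i])
    · rw [hflatten_succ, hflatten_succ] at hst
      obtain ⟨hpq, hrest⟩ := List.replicate_append_inj_of_head?_ne (hhead i _) (hhead j _) hst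
      obtain rfl : i = j := hw.eq_of_append_eq hrest
      obtain rfl : p = q := by omega
      rw [ih s'.length (by simp [← hN]; omega) s' t' (List.append_cancel_left hrest) rfl]

end UniquelyDecodable

section Counting

open scoped Classical

variable {α : Type*} [Fintype α] {M k : ℕ}

theorem card_fun_subtype_ne (i : Fin M) :
    Fintype.card ({j // j ≠ i} → Fin k → α) = (Fintype.card α ^ k) ^ (M - 1) := by
  simp [Fintype.card_subtype_compl]

variable [DecidableEq α]

def stripLeading (x : α) (g : Fin M → Fin k → α) (i : Fin M) : List α :=
  (List.ofFn (g i)).dropWhile (· == x)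

/-- A stripped word that is a prefix of a list determined by the other words is determined by its
length, which takes at most `k + 1` values. -/
theorem card_filter_stripLeading_prefix_le (x : α) (i : Fin M)
    (T : (Fin M → Fin k → α) → List α) (hT : ∀ g g', (∀ j, j ≠ i → g j = g' j) → T g = T g') :
    #{g | stripLeading x g i <+: T g} ≤ (k + 1) * (Fintype.card α ^ k) ^ (M - 1) := by
  rw [← card_fun_subtype_ne i, ← card_range (k + 1), ← card_univ, ← card_product]
  refine card_le_card_of_injOn (fun g => ((stripLeading x g i).length, fun j => g j)) ?_ ?_
  · intro g _
    simp only [coe_product, coe_range, coe_univ, Set.mem_prod, Set.mem_Iio, Set.mem_univ, and_true]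
    exact Nat.lt_succ_of_le ((List.length_dropWhile_le _ _).trans List.length_ofFn.le)
  · intro g hg g' hg' hgg'
    simp only [coe_filter, mem_univ, true_and, Set.mem_ofPred_eq, Prod.mk.injEq] at hg hg' hgg'
    obtain ⟨hlen, hrest⟩ := hgg'
    have hother : ∀ j, j ≠ i → g j = g' j := fun j hj => congrFun hrest ⟨j, hj⟩
    have hstrip : stripLeading x g i = stripLeading x g' i := by
      rw [List.prefix_iff_eq_take.1 hg, List.prefix_iff_eq_take.1 hg', hlen, hT g g' hother]
    have hi : g i = g' i :=
      List.ofFn_injective (List.eq_of_length_eq_of_dropWhile_beq_eq x (by simp) hstrip)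
    funext j
    by_cases hj : j = i
    · rw [hj, hi]
    · exact hother j hj

/-- A family fails to strip to a prefix code only if some stripped word is a prefix of `[]` or of
another stripped word. -/
theorem card_pow_le_card_filter_isPrefixCode_add (x : α) :
    (Fintype.card α ^ k) ^ M ≤ #{g : Fin M → Fin k → α | IsPrefixCode (stripLeading x g)} +
      M * M * ((k + 1) * (Fintype.card α ^ k) ^ (M - 1)) := by
  set T : Fin M → Fin M → (Fin M → Fin k → α) → List α :=
    fun i j g => if j = i then [] else stripLeading x g j
  have hbad : ({g | ¬ IsPrefixCode (stripLeading x g)} : Finset (Fin M → Fin k → α)) ⊆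
      (univ ×ˢ univ).biUnion fun ij => {g | stripLeading x g ij.1 <+: T ij.1 ij.2 g} := by
    intro g hg
    simp only [mem_filter, mem_univ, true_and, isPrefixCode_iff, not_and_or, not_forall,
      not_not] at hg
    simp only [mem_biUnion, mem_product, mem_univ, true_and, mem_filter, Prod.exists]
    rcases hg with ⟨i, hi⟩ | ⟨i, j, hij, hpre⟩
    · exact ⟨i, i, by simp [T, hi]⟩
    · exact ⟨i, j, by simpa [T, Ne.symm hij] using hpre⟩
  have hcard_bad := (card_le_card hbad).trans card_biUnion_le
  have hbound : ∀ ij ∈ (univ ×ˢ univ : Finset (Fin M × Fin M)),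
      #{g | stripLeading x g ij.1 <+: T ij.1 ij.2 g} ≤ (k + 1) * (Fintype.card α ^ k) ^ (M - 1) :=
    fun ij _ => card_filter_stripLeading_prefix_le x ij.1 (T ij.1 ij.2) fun g g' h => by
      by_cases hji : ij.2 = ij.1
      · simp [T, hji]
      · simp [T, hji, stripLeading, h ij.2 hji]
  have := (sum_le_sum hbound).trans_eq' rfl
  have htotal := card_filter_add_card_filter_not (s := (univ : Finset (Fin M → Fin k → α)))
    fun g => IsPrefixCode (stripLeading x g)
  simp only [card_univ, Fintype.card_fun, Fintype.card_fin] at htotal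
  simp only [sum_const, card_product, card_univ, Fintype.card_fin, smul_eq_mul] at this
  omega

end Counting

section LengthDistribution

theorem finite_UD (n : ℕ) {m : ℕ} (L : Fin m → ℕ) : (UD n L).Finite :=
  (Set.Finite.pi fun i => List.finite_length_eq (Fin n) (L i)).subset fun _ hv i _ => hv.1 i

theorem xi_le_rho {n m : ℕ} {L : Fin m → ℕ} (hL : ∀ i, 1 ≤ L i) (hne : (UD n L).Nonempty) :
    xi n m ≤ rho n L :=
  csInf_le ⟨0, by rintro r ⟨L, -, -, rfl⟩; unfold rho; positivity⟩ ⟨L, hL, hne, rfl⟩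

open scoped Classical in
theorem le_ncard_UD (n M k : ℕ) :
    n * (n ^ k) ^ M ≤
      (UD n (Fin.cons 1 fun _ : Fin M => k)).ncard +
        n * (M * M * ((k + 1) * (n ^ k) ^ (M - 1))) := by
  set P : Finset (Fin n × (Fin M → Fin k → Fin n)) :=
    {xg | IsPrefixCode (stripLeading xg.1 xg.2)}
  have hP : #P ≤ (UD n (Fin.cons 1 fun _ : Fin M => k)).ncard := by
    rw [← Set.ncard_coe_finset]
    refine Set.ncard_le_ncard_of_injOn (fun xg => Fin.cons [xg.1] fun i => List.ofFn (xg.2 i))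
      ?_ ?_ (finite_UD _ _)
    · rintro ⟨x, g⟩ hxg
      simp only [P, coe_filter, mem_univ, true_and, Set.mem_ofPred_eq] at hxg
      exact ⟨Fin.cases rfl fun i => by simp, isUDCode_cons_singleton x _ hxg⟩
    · rintro ⟨x, g⟩ - ⟨x', g'⟩ - h
      have hx : x = x' := by simpa using congrFun h 0
      have hg : g = g' := funext fun i => List.ofFn_injective (by simpa using congrFun h i.succ)
      rw [hx, hg]
  have hsum :
      #P = ∑ x : Fin n, #{g : Fin M → Fin k → Fin n | IsPrefixCode (stripLeading x g)} := by
    simp only [P, card_filter, Fintype.sum_prod_type]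
  have hgood := sum_le_sum fun x (_ : x ∈ univ) =>
    card_pow_le_card_filter_isPrefixCode_add (α := Fin n) (M := M) (k := k) x
  simp only [Fintype.card_fin, sum_const, card_univ, smul_eq_mul, sum_add_distrib] at hgood
  rw [← hsum] at hgood
  omega

theorem ncard_PR_le (n M K : ℕ) :
    (PR (n + 1) (Fin.cons 1 fun _ : Fin M => K + 1)).ncard ≤ (n + 1) * (n * (n + 1) ^ K) ^ M := by
  let F : Fin (n + 1) × (Fin M → Fin n × (Fin K → Fin (n + 1))) →
      Fin (M + 1) → List (Fin (n + 1)) :=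
    fun xf => Fin.cons [xf.1] fun i => xf.1.succAbove (xf.2 i).1 :: List.ofFn (xf.2 i).2
  have hPR : PR (n + 1) (Fin.cons 1 fun _ : Fin M => K + 1) ⊆ Set.range F := by
    rintro v ⟨hlen, hpc⟩
    obtain ⟨x, hx⟩ := List.length_eq_one_iff.1 (by simpa using hlen 0)
    have hword : ∀ i : Fin M, ∃ p : Fin n × (Fin K → Fin (n + 1)),
        v i.succ = x.succAbove p.1 :: List.ofFn p.2 := by
      intro i
      obtain ⟨y, w, hyw⟩ := List.exists_cons_of_length_eq_add_one (by simpa using hlen i.succ)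
      have hyx : y ≠ x := by
        rintro rfl
        exact hpc.2.2 0 i.succ (Fin.succ_ne_zero i).symm (by simp [hx, hyw])
      obtain ⟨z, hz⟩ := Fin.exists_succAbove_eq hyx
      have hw : w.length = K := by simpa [hyw] using hlen i.succ
      refine ⟨(z, fun t => w[t.1]), ?_⟩
      rw [hyw, hz, List.cons.injEq]
      exact ⟨rfl, List.ext_getElem (by simp [hw]) fun _ _ _ => by simp⟩
    choose f hf using hword
    exact ⟨(x, f), funext (Fin.cases hx.symm fun i => (hf i).symm)⟩
  calc _ ≤ (Set.range F).ncard := Set.ncard_le_ncard hPR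
    _ ≤ (Set.univ : Set (Fin (n + 1) × (Fin M → Fin n × (Fin K → Fin (n + 1))))).ncard := by
      rw [← Set.image_univ]; exact Set.ncard_image_le
    _ = _ := by simp

end LengthDistribution

section Asymptotics

theorem pow_sub_mul_pow_pred {N : ℝ} (hN : N ≠ 0) (M : ℕ) (c : ℝ) :
    N ^ M - M * c * N ^ (M - 1) = N ^ M * (1 - M * c / N) := by
  cases M with
  | zero => simp
  | succ M => field_simp; push_cast; ring

/-- `(n - 1)^i ≤ n^i - 1` bounds each term of `η_{n,m}` by a term of the binomial expansion of
`(1 + 1/(n - 1))^(m - 1)`. -/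
theorem eta_le {n : ℕ} (hn : 2 ≤ n) (M : ℕ) : eta n (M + 1) ≤ ((n : ℝ) / (n - 1)) ^ M := by
  have hn1 : (1 : ℝ) < n := by exact_mod_cast hn
  have hterm : ∀ i ∈ Icc 1 M, (M.choose i : ℝ) / ((n : ℝ) ^ i - 1) ≤
      (1 / ((n : ℝ) - 1)) ^ i * M.choose i := by
    intro i hi
    have hpow : ((n : ℝ) - 1) ^ i + 1 ≤ (n : ℝ) ^ i := by
      simpa using pow_add_pow_le (by linarith : (0 : ℝ) ≤ n - 1) zero_le_one
        (by have := (mem_Icc.1 hi).1; omega : i ≠ 0)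
    rw [one_div_pow, one_div_mul_eq_div]
    exact div_le_div_of_nonneg_left (by positivity) (pow_pos (by linarith) i) (by linarith)
  have hsplit : range (M + 1) = insert 0 (Icc 1 M) := by ext; simp; omega
  calc eta n (M + 1) ≤ 1 + ∑ i ∈ Icc 1 M, (1 / ((n : ℝ) - 1)) ^ i * M.choose i := by
        unfold eta; simpa using sum_le_sum hterm
    _ = (1 / ((n : ℝ) - 1) + 1) ^ M := by
        rw [add_pow, hsplit, sum_insert (by simp)]; simp
    _ = ((n : ℝ) / (n - 1)) ^ M := by
        rw [div_add_one (by linarith), add_sub_cancel]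

theorem pow_le_one_div_eta {n : ℕ} (hn : 2 ≤ n) (M : ℕ) :
    (((n : ℝ) - 1) / n) ^ M ≤ 1 / eta n (M + 1) := by
  have heta : 0 < eta n (M + 1) := by
    have hn1 : (1 : ℝ) < n := by exact_mod_cast hn
    unfold eta
    have : 0 ≤ ∑ i ∈ Icc 1 (M + 1 - 1), ((M + 1 - 1).choose i : ℝ) / ((n : ℝ) ^ i - 1) :=
      sum_nonneg fun i _ => div_nonneg (by positivity) (by linarith [one_le_pow₀ hn1.le (n := i)])
    linarith
  calc (((n : ℝ) - 1) / n) ^ M = 1 / ((n : ℝ) / (n - 1)) ^ M := by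
        rw [one_div, ← inv_pow, inv_div]
    _ ≤ 1 / eta n (M + 1) := one_div_le_one_div_of_le heta (eta_le hn M)

theorem tendsto_mul_add_one_div_pow_atTop (a : ℝ) {r : ℝ} (hr : 1 < r) :
    Tendsto (fun k : ℕ => a * (k + 1) / r ^ k) atTop (𝓝 0) := by
  have h := (tendsto_pow_const_div_const_pow_of_one_lt 1 hr).add
    (tendsto_pow_const_div_const_pow_of_one_lt 0 hr)
  simpa [mul_div_assoc, add_div] using h.const_mul a

end Asymptotics

theorem xi_le_pow_div_one_sub {n : ℕ} (hn : 2 ≤ n) (M : ℕ) {k : ℕ} (hk : 1 ≤ k)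
    (hε : (M * M : ℝ) * (k + 1) / (n : ℝ) ^ k < 1) :
    xi n (M + 1) ≤ (((n : ℝ) - 1) / n) ^ M / (1 - M * M * (k + 1) / (n : ℝ) ^ k) := by
  obtain ⟨K, rfl⟩ : ∃ K, k = K + 1 := ⟨k - 1, by omega⟩
  set ε : ℝ := M * M * ((K + 1 : ℕ) + 1) / (n : ℝ) ^ (K + 1) with hε_def
  set L : Fin (M + 1) → ℕ := Fin.cons 1 fun _ => K + 1
  have hN : (0 : ℝ) < (n : ℝ) ^ (K + 1) := by positivity
  have hUD : (n : ℝ) * (((n : ℝ) ^ (K + 1)) ^ M * (1 - ε)) ≤ (UD n L).ncard := by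
    have hid := pow_sub_mul_pow_pred hN.ne' M (M * ((K + 1 : ℕ) + 1))
    rw [← mul_assoc, ← hε_def] at hid
    have h := Nat.cast_le (α := ℝ).2 (le_ncard_UD n M (K + 1))
    rw [← hid]
    push_cast at h ⊢
    linarith
  have hpos : 0 < (n : ℝ) * (((n : ℝ) ^ (K + 1)) ^ M * (1 - ε)) := by
    have : 0 < 1 - ε := by linarith
    positivity
  have hne : (UD n L).Nonempty :=
    Set.nonempty_of_ncard_ne_zero (by exact_mod_cast (hpos.trans_le hUD).ne')
  have hPR : ((PR n L).ncard : ℝ) ≤ n * ((n - 1) * (n : ℝ) ^ K) ^ M := by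
    obtain ⟨c, rfl⟩ : ∃ c, n = c + 1 := ⟨n - 1, by omega⟩
    simpa using (Nat.cast_le (α := ℝ)).2 (ncard_PR_le c M K)
  calc xi n (M + 1) ≤ rho n L := xi_le_rho (Fin.cases le_rfl fun _ => Nat.succ_pos K) hne
    _ ≤ n * ((n - 1) * (n : ℝ) ^ K) ^ M / (n * (((n : ℝ) ^ (K + 1)) ^ M * (1 - ε))) :=
      div_le_div₀ ((Nat.cast_nonneg _).trans hPR) hPR hpos hUD
    _ = (((n : ℝ) - 1) / n) ^ M / (1 - ε) := by
      rw [mul_div_mul_left _ _ (by positivity), ← div_div, ← div_pow, pow_succ',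
        mul_div_mul_right _ _ (by positivity)]

/-- Theorem 3: `ξ_{n,m} ≤ 1/η_{n,m}`. -/
theorem stmt7 (n m : ℕ) (hn : 2 ≤ n) (hm : 1 ≤ m) : xi n m ≤ 1 / eta n m := by
  obtain ⟨M, rfl⟩ : ∃ M, m = M + 1 := ⟨m - 1, by omega⟩
  set ε : ℕ → ℝ := fun k => M * M * (k + 1) / (n : ℝ) ^ k
  have hε : Tendsto ε atTop (𝓝 0) := tendsto_mul_add_one_div_pow_atTop _ (by exact_mod_cast hn)
  have hlim : Tendsto (fun k => (((n : ℝ) - 1) / n) ^ M / (1 - ε k)) atTop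
      (𝓝 ((((n : ℝ) - 1) / n) ^ M)) := by
    have h := (tendsto_const_nhds (x := (((n : ℝ) - 1) / n) ^ M)).div
      ((tendsto_const_nhds (x := (1 : ℝ))).sub hε) (by simp)
    rwa [sub_zero, div_one] at h
  have hxi : ∀ᶠ k in atTop, xi n (M + 1) ≤ (((n : ℝ) - 1) / n) ^ M / (1 - ε k) :=
    ((hε.eventually_lt_const one_pos).and (eventually_ge_atTop 1)).mono fun k hk =>
      xi_le_pow_div_one_sub hn M hk.2 hk.1
  exact (ge_of_tendsto hlim hxi).trans (pow_le_one_div_eta hn M)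
end
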